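/- Let G be a nonempty finite simple graph and let H be a finite simple graph with γ(H) = 1. Then C^max(G∘H) = C^max(G) · |V(H)| + γ(G) · (|V(H)| − 1), where C^max denotes the maximum domination cover number over all minimum dominating sets and G∘H is the lexicographic product. -/

import Mathlib

open Finset

variable {α β : Type*}

/-- `D` is a dominating set of `G`: every vertex outside `D` has a neighbor in `D`. -/
def IsDomSet (G : SimpleGraph α) (D : Finset α) : Prop :=
  ∀ v ∉ D, ∃ u ∈ D, G.Adj u v

/-- The domination number `γ(G)`: minimum cardinality of a dominating set. -/
noncomputable def domNum (G : SimpleGraph α) : ℕ :=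
  sInf {n | ∃ D : Finset α, IsDomSet G D ∧ D.card = n}

/-- The degree of vertex `v` in `G`. -/
noncomputable def vdeg (G : SimpleGraph α) (v : α) : ℕ :=
  Nat.card (G.neighborSet v)

/-- The (domination) cover number of a set of vertices `A`: the sum of degrees. -/
noncomputable def coverNum (G : SimpleGraph α) (A : Finset α) : ℕ :=
  ∑ v ∈ A, vdeg G v

/-- `D` is a minimum dominating set (γ-set) of `G`. -/
def IsGammaSet (G : SimpleGraph α) (D : Finset α) : Prop :=
  IsDomSet G D ∧ D.card = domNum G

/-- The maximum domination cover number over all γ-sets of `G`. -/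
noncomputable def cmax (G : SimpleGraph α) : ℕ :=
  sSup {c | ∃ D : Finset α, IsGammaSet G D ∧ coverNum G D = c}

/-- The lexicographic product `G ∘ H` of two simple graphs. -/
def lexProd (G : SimpleGraph α) (H : SimpleGraph β) : SimpleGraph (α × β) where
  Adj a b := G.Adj a.1 b.1 ∨ (a.1 = b.1 ∧ H.Adj a.2 b.2)
  symm := by
    constructor
    rintro a b (h | ⟨h1, h2⟩)
    · exact Or.inl h.symm
    · exact Or.inr ⟨h1.symm, h2.symm⟩
  loopless := by
    constructor
    rintro a (h | ⟨_, h⟩)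
    · exact G.irrefl h
    · exact H.irrefl h


/-
A γ-set of `G ∘ H` meets every fibre `{a} × V(H)` at most once, since its projection to `G` is
dominating and `γ(G ∘ H) = γ(G)`; so it is a γ-set of `G` with one `H`-coordinate chosen per
vertex. As `deg (a, y) = deg_G a · |V(H)| + deg_H y`, its cover number is at most
`C^max(G) · |V(H)| + γ(G) · (|V(H)| − 1)`, and choosing a universal vertex of `H` (which exists
because `γ(H) = 1`) as every `H`-coordinate of a `C^max`-realising γ-set of `G` attains the bound.
-/

open Finset SimpleGraph

lemma IsDomSet.domNum_le_card {G : SimpleGraph α} {D : Finset α} (hD : IsDomSet G D) :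
    domNum G ≤ D.card :=
  Nat.sInf_le ⟨D, hD, rfl⟩

section Domination

variable [Fintype α]

lemma exists_isGammaSet (G : SimpleGraph α) : ∃ D, IsGammaSet G D :=
  Nat.sInf_mem (s := {n | ∃ D : Finset α, IsDomSet G D ∧ D.card = n})
    ⟨_, univ, fun v hv => absurd (mem_univ v) hv, rfl⟩

lemma bddAbove_coverNum_isGammaSet (G : SimpleGraph α) :
    BddAbove {c | ∃ D : Finset α, IsGammaSet G D ∧ coverNum G D = c} :=
  ⟨coverNum G univ, by rintro _ ⟨D, -, rfl⟩; exact sum_le_sum_of_subset (subset_univ D)⟩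

lemma exists_isGammaSet_coverNum_eq_cmax (G : SimpleGraph α) :
    ∃ D, IsGammaSet G D ∧ coverNum G D = cmax G := by
  obtain ⟨D, hD⟩ := exists_isGammaSet G
  exact Nat.sSup_mem (s := {c | ∃ D : Finset α, IsGammaSet G D ∧ coverNum G D = c})
    ⟨_, D, hD, rfl⟩ (bddAbove_coverNum_isGammaSet G)

lemma IsGammaSet.coverNum_le_cmax {G : SimpleGraph α} {D : Finset α} (hD : IsGammaSet G D) :
    coverNum G D ≤ cmax G :=
  le_csSup (bddAbove_coverNum_isGammaSet G) ⟨D, hD, rfl⟩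

lemma exists_isUniversal_of_domNum_eq_one {G : SimpleGraph α} (hG : domNum G = 1) :
    ∃ x, G.IsUniversal x := by
  obtain ⟨D, hD, hcard⟩ := exists_isGammaSet G
  obtain ⟨x, rfl⟩ := card_eq_one.1 (hcard.trans hG)
  refine ⟨x, fun y hxy => ?_⟩
  obtain ⟨u, hu, hadj⟩ := hD y (by simpa using hxy.symm)
  rwa [mem_singleton.1 hu] at hadj

end Domination

section Degree

variable [Fintype α]

lemma vdeg_eq_degree (G : SimpleGraph α) [DecidableRel G.Adj] (v : α) :
    vdeg G v = G.degree v := by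
  rw [vdeg, Nat.card_eq_fintype_card, card_neighborSet_eq_degree]

lemma vdeg_le_card_sub_one (G : SimpleGraph α) (v : α) : vdeg G v ≤ Fintype.card α - 1 := by
  classical
  exact (vdeg_eq_degree G v).trans_le (Nat.le_sub_one_of_lt (G.degree_lt_card_verts v))

lemma SimpleGraph.IsUniversal.vdeg_eq {G : SimpleGraph α} {v : α} (hv : G.IsUniversal v) :
    vdeg G v = Fintype.card α - 1 := by
  classical
  exact (vdeg_eq_degree G v).trans ((G.degree_eq_card_sub_one v).2 hv)

lemma vdeg_lexProd [Fintype β] (G : SimpleGraph α) (H : SimpleGraph β) (a : α) (y : β) :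
    vdeg (lexProd G H) (a, y) = vdeg G a * Fintype.card β + vdeg H y := by
  classical
  have hnbr : (lexProd G H).neighborFinset (a, y) =
      G.neighborFinset a ×ˢ univ ∪ {a} ×ˢ H.neighborFinset y := by
    ext ⟨b, z⟩
    rw [mem_neighborFinset]
    simp [lexProd, and_comm]
  have hdisj : Disjoint (G.neighborFinset a ×ˢ (univ : Finset β)) ({a} ×ˢ H.neighborFinset y) :=
    disjoint_product.2 (Or.inl (by simp))
  simp only [vdeg_eq_degree, ← card_neighborFinset_eq_degree, hnbr, card_union_of_disjoint hdisj,
    card_product, card_univ, card_singleton, one_mul]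

end Degree

section LexProd

variable {G : SimpleGraph α} {H : SimpleGraph β} {x : β}

lemma IsDomSet.image_fst [DecidableEq α] [Nonempty β] {D : Finset (α × β)}
    (hD : IsDomSet (lexProd G H) D) :
    IsDomSet G (D.image Prod.fst) := by
  intro a ha
  obtain ⟨y⟩ := ‹Nonempty β›
  obtain ⟨u, hu, hadj⟩ := hD (a, y) fun h => ha (mem_image_of_mem _ h)
  rcases hadj with hadj | ⟨rfl, -⟩
  · exact ⟨u.1, mem_image_of_mem _ hu, hadj⟩
  · exact absurd (mem_image_of_mem _ hu) ha

lemma IsDomSet.image_mk [DecidableEq (α × β)] (hx : H.IsUniversal x) {D : Finset α}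
    (hD : IsDomSet G D) :
    IsDomSet (lexProd G H) (D.image (·, x)) := by
  rintro ⟨a, y⟩ hay
  by_cases ha : a ∈ D
  · have hxy : x ≠ y := by rintro rfl; exact hay (mem_image_of_mem _ ha)
    exact ⟨(a, x), mem_image_of_mem _ ha, Or.inr ⟨rfl, hx hxy⟩⟩
  · obtain ⟨u, hu, hadj⟩ := hD a ha
    exact ⟨(u, x), mem_image_of_mem _ hu, Or.inl hadj⟩

variable [Fintype α] [Fintype β]

lemma domNum_lexProd (hx : H.IsUniversal x) : domNum (lexProd G H) = domNum G := by
  classical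
  have : Nonempty β := ⟨x⟩
  obtain ⟨D, hD, hcard⟩ := exists_isGammaSet (lexProd G H)
  obtain ⟨D', hD', hcard'⟩ := exists_isGammaSet G
  apply le_antisymm
  · calc domNum (lexProd G H) ≤ (D'.image (·, x)).card := (hD'.image_mk hx).domNum_le_card
      _ ≤ domNum G := hcard' ▸ card_image_le
  · calc domNum G ≤ (D.image Prod.fst).card := hD.image_fst.domNum_le_card
      _ ≤ domNum (lexProd G H) := hcard ▸ card_image_le

lemma IsGammaSet.image_mk [DecidableEq (α × β)] (hx : H.IsUniversal x) {D : Finset α}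
    (hD : IsGammaSet G D) :
    IsGammaSet (lexProd G H) (D.image (·, x)) := by
  refine ⟨hD.1.image_mk hx, ?_⟩
  rw [card_image_of_injective _ (Prod.mk_left_injective x), hD.2, domNum_lexProd hx]

lemma IsGammaSet.card_image_fst [DecidableEq α] (hx : H.IsUniversal x) {D : Finset (α × β)}
    (hD : IsGammaSet (lexProd G H) D) : (D.image Prod.fst).card = D.card := by
  have : Nonempty β := ⟨x⟩
  refine le_antisymm card_image_le ?_
  rw [hD.2, domNum_lexProd hx]
  exact hD.1.image_fst.domNum_le_card

lemma IsGammaSet.image_fst [DecidableEq α] (hx : H.IsUniversal x) {D : Finset (α × β)}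
    (hD : IsGammaSet (lexProd G H) D) : IsGammaSet G (D.image Prod.fst) := by
  have : Nonempty β := ⟨x⟩
  exact ⟨hD.1.image_fst, by rw [hD.card_image_fst hx, hD.2, domNum_lexProd hx]⟩

lemma coverNum_lexProd_of_injOn [DecidableEq α] {D : Finset (α × β)}
    (hD : Set.InjOn Prod.fst (D : Set (α × β))) :
    coverNum (lexProd G H) D =
      coverNum G (D.image Prod.fst) * Fintype.card β + ∑ p ∈ D, vdeg H p.2 := by
  rw [coverNum, coverNum, sum_image hD, sum_mul, ← sum_add_distrib]
  exact sum_congr rfl fun p _ => vdeg_lexProd G H p.1 p.2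

lemma coverNum_lexProd_image_mk [DecidableEq (α × β)] (D : Finset α) :
    coverNum (lexProd G H) (D.image (·, x)) =
      coverNum G D * Fintype.card β + D.card * vdeg H x := by
  rw [coverNum, sum_image fun _ _ _ _ h => Prod.mk_left_injective x h]
  simp only [vdeg_lexProd, sum_add_distrib, ← sum_mul, sum_const, smul_eq_mul]
  rfl

end LexProd

theorem lexProd_cmax_of_domNum_eq_one_general [Fintype α] [Fintype β]
    (G : SimpleGraph α) (H : SimpleGraph β) (hH : domNum H = 1) :
    cmax (lexProd G H) = cmax G * Fintype.card β + domNum G * (Fintype.card β - 1) := by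
  classical
  obtain ⟨x, hx⟩ := exists_isUniversal_of_domNum_eq_one hH
  apply le_antisymm
  · obtain ⟨D, hD, hDmax⟩ := exists_isGammaSet_coverNum_eq_cmax (lexProd G H)
    have hinj : Set.InjOn Prod.fst (D : Set (α × β)) :=
      card_image_iff.1 (hD.card_image_fst hx)
    calc cmax (lexProd G H)
        = coverNum G (D.image Prod.fst) * Fintype.card β + ∑ p ∈ D, vdeg H p.2 := by
          rw [← hDmax, coverNum_lexProd_of_injOn hinj]
      _ ≤ cmax G * Fintype.card β + ∑ _p ∈ D, (Fintype.card β - 1) := by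
          gcongr with p
          exacts [(hD.image_fst hx).coverNum_le_cmax, vdeg_le_card_sub_one H p.2]
      _ = cmax G * Fintype.card β + domNum G * (Fintype.card β - 1) := by
          rw [sum_const, smul_eq_mul, hD.2, domNum_lexProd hx]
  · obtain ⟨D, hD, hDmax⟩ := exists_isGammaSet_coverNum_eq_cmax G
    calc cmax G * Fintype.card β + domNum G * (Fintype.card β - 1)
        = coverNum (lexProd G H) (D.image (·, x)) := by
          rw [coverNum_lexProd_image_mk, hDmax, hD.2, hx.vdeg_eq]
      _ ≤ cmax (lexProd G H) := (hD.image_mk hx).coverNum_le_cmax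

/-- If `G` is a nonempty finite graph and `γ(H) = 1`, then
`C^max(G ∘ H) = C^max(G) · |V(H)| + γ(G) · (|V(H)| − 1)`. -/
theorem lexProd_cmax_of_domNum_eq_one [Fintype α] [Fintype β] [Nonempty α]
    (G : SimpleGraph α) (H : SimpleGraph β) (hH : domNum H = 1) :
    cmax (lexProd G H) = cmax G * Fintype.card β + domNum G * (Fintype.card β - 1) :=
  lexProd_cmax_of_domNum_eq_one_general G H hH
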